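/- Let H ⊆ J be open compact subgroups of a locally profinite group G with H pro-(order prime to ℓ), let π be an irreducible smooth representation of G over a field C of characteristic ℓ with π^J ≠ 0, and suppose the restriction π|_H contains an irreducible subquotient ρ. Then there exists g ∈ G such that ρ has a nonzero vector fixed by H ∩ gJg^{-1}. -/

import Mathlib

/-- An `ℓ'`-subgroup: an open compact subgroup that is profinite with all finite continuous
quotients of order prime to `ℓ`. -/
def IsEllPrimeSubgroup {G : Type*} [Group G] [TopologicalSpace G] (ℓ : ℕ)
    (K : Subgroup G) : Prop :=
  IsOpen (K : Set G) ∧ IsCompact (K : Set G) ∧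
    ∀ N : Subgroup K, N.Normal → IsOpen (N : Set K) → ¬ (ℓ ∣ N.index)

/-!
Take a nonzero `J`-fixed vector `v`. The vectors `u` with `s (g • u) = 0` for all `g ∈ G` form a
`G`-stable subspace that is not everything (as `s ≠ 0`), so by irreducibility it is zero and
some `s (g • v)` is nonzero. As `g • v` is fixed by `gJg⁻¹` and `s` is `H`-equivariant,
`s (g • v)` is fixed by `H ∩ gJg⁻¹`.
-/

namespace Representation

theorem exists_apply_ne_zero_of_irreducible {k G V W : Type*} [CommSemiring k] [Monoid G]
    [AddCommMonoid V] [Module k V] [AddCommMonoid W] [Module k W] (π : Representation k G V)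
    (hirr : ∀ U : Submodule k V, (∀ g : G, ∀ u ∈ U, π g u ∈ U) → U = ⊥ ∨ U = ⊤)
    {f : V →ₗ[k] W} (hf : f ≠ 0) {v : V} (hv : v ≠ 0) : ∃ g : G, f (π g v) ≠ 0 := by
  by_contra! hvU
  let U : Submodule k V := ⨅ g : G, LinearMap.ker (f ∘ₗ π g)
  have mem_U {u : V} : u ∈ U ↔ ∀ g : G, f (π g u) = 0 := by
    simp only [U, Submodule.mem_iInf, LinearMap.mem_ker, LinearMap.comp_apply]
  have hU : ∀ g : G, ∀ u ∈ U, π g u ∈ U := fun g u hu =>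
    mem_U.2 fun g' => by rw [← Module.End.mul_apply, ← map_mul]; exact mem_U.1 hu _
  rcases hirr U hU with hbot | htop
  · exact hv ((Submodule.mem_bot k).1 (hbot ▸ mem_U.2 hvU))
  · refine hf (LinearMap.ext fun u => ?_)
    simpa using mem_U.1 (htop ▸ Submodule.mem_top : u ∈ U) 1

theorem apply_apply_eq_self_of_conj_mem {k G V : Type*} [CommSemiring k] [Group G]
    [AddCommMonoid V] [Module k V] (π : Representation k G V) {J : Subgroup G} {v : V}
    (hv : ∀ g ∈ J, π g v = v) {g h : G} (hh : g⁻¹ * h * g ∈ J) : π h (π g v) = π g v := by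
  calc π h (π g v) = π (h * g) v := by rw [map_mul, Module.End.mul_apply]
    _ = π (g * (g⁻¹ * h * g)) v := by rw [← mul_assoc, mul_inv_cancel_left]
    _ = π g v := by rw [map_mul, Module.End.mul_apply, hv _ hh]

end Representation

theorem exists_fixed_vector_in_subquotient_general
    (G : Type*) [Group G]
    (C : Type*) [Field C]
    (H J : Subgroup G)
    (V : Type*) [AddCommGroup V] [Module C V]
    (π : Representation C G V)
    (hirr : ∀ U : Submodule C V, (∀ g : G, ∀ u ∈ U, π g u ∈ U) → U = ⊥ ∨ U = ⊤)
    -- `π^J ≠ 0`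
    (hfix : ∃ v : V, v ≠ 0 ∧ ∀ g ∈ J, π g v = v)
    -- `ρ`, an irreducible subquotient of `π|_H`, with `H`-equivariant surjection `s`
    (W : Type*) [AddCommGroup W] [Module C W] [Nontrivial W]
    (ρ : Representation C H W)
    (s : V →ₗ[C] W) (hs : Function.Surjective s)
    (hequiv : ∀ h : H, ∀ x : V, s (π (h : G) x) = ρ h (s x)) :
    ∃ g : G, ∃ w : W, w ≠ 0 ∧
      ∀ h : H, ((g⁻¹ * (h : G) * g) ∈ J) → ρ h w = w := by
  obtain ⟨v, hv0, hvJ⟩ := hfix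
  obtain ⟨g, hg⟩ :=
    π.exists_apply_ne_zero_of_irreducible hirr (LinearMap.ne_zero_of_surjective hs) hv0
  refine ⟨g, s (π g v), hg, fun h hh => ?_⟩
  rw [← hequiv, π.apply_apply_eq_self_of_conj_mem hvJ hh]

/-- let `H ⊆ J` be open compact subgroups of a locally profinite group `G`
with `H` an `ℓ'`-subgroup, `π` an irreducible smooth representation of `G` over a field `C`
of characteristic `ℓ` with `π^J ≠ 0`, and `ρ` an irreducible subquotient of `π|_H` (given by
an `H`-equivariant surjection `s : π → ρ`). Then some `g ∈ G` gives a nonzero vector of `ρ`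
fixed by `H ∩ gJg⁻¹`. -/
theorem exists_fixed_vector_in_subquotient
    (ℓ : ℕ)
    (G : Type*) [Group G] [TopologicalSpace G] [IsTopologicalGroup G]
    [T2Space G] [LocallyCompactSpace G] [TotallyDisconnectedSpace G]
    (C : Type*) [Field C] [CharP C ℓ]
    (H J : Subgroup G) (hHJ : H ≤ J)
    (hH : IsEllPrimeSubgroup ℓ H)
    (hJopen : IsOpen (J : Set G)) (hJcpt : IsCompact (J : Set G))
    (V : Type*) [AddCommGroup V] [Module C V] [Nontrivial V]
    (π : Representation C G V)
    (hsmooth : ∀ v : V, IsOpen {g : G | π g v = v})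
    (hirr : ∀ U : Submodule C V, (∀ g : G, ∀ u ∈ U, π g u ∈ U) → U = ⊥ ∨ U = ⊤)
    -- `π^J ≠ 0`
    (hfix : ∃ v : V, v ≠ 0 ∧ ∀ g ∈ J, π g v = v)
    -- `ρ`, an irreducible subquotient of `π|_H`, with `H`-equivariant surjection `s`
    (W : Type*) [AddCommGroup W] [Module C W] [Nontrivial W]
    (ρ : Representation C H W)
    (hρirr : ∀ U : Submodule C W, (∀ h : H, ∀ u ∈ U, ρ h u ∈ U) → U = ⊥ ∨ U = ⊤)
    (s : V →ₗ[C] W) (hs : Function.Surjective s)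
    (hequiv : ∀ h : H, ∀ x : V, s (π (h : G) x) = ρ h (s x)) :
    ∃ g : G, ∃ w : W, w ≠ 0 ∧
      ∀ h : H, ((g⁻¹ * (h : G) * g) ∈ J) → ρ h w = w :=
  exists_fixed_vector_in_subquotient_general G C H J V π hirr hfix W ρ s hs hequiv
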